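/- Let Y carry the cylinder topology τ_cyl built from locally compact T1 sober spaces Y_k. If K̃ ⊆ Y is compact and saturated and w ∈ Y \ K̃, then there exist finitely many compact sets K_i ⊆ Y_{k_i} (i = 1,…,n) such that K̃ ⊆ ⋃_{i=1}^n Z(K_i) and w ∉ ⋃_{i=1}^n Z(K_i). -/

import Mathlib

open Set Topology TopologicalSpace Filter

universe u

variable {X : ℕ → Type u}

/-- Restriction (truncation) of a finite sequence of length `l` to length `k ≤ l`. -/
def restrictSeq {X : ℕ → Type u} {k l : ℕ} (h : k ≤ l) (f : (i : Fin l) → X i.1) :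
    (i : Fin k) → X i.1 :=
  fun i => f ⟨i.1, lt_of_lt_of_le i.2 h⟩

/-- The space `Y` of all finite and infinite compatible sequences for the family
of subspaces `Y k ⊆ X 0 × ⋯ × X (k-1)`. -/
def PathSpace (Y : (k : ℕ) → Set ((i : Fin k) → X i.1)) : Type u :=
  (Σ k : ℕ, {f : (i : Fin k) → X i.1 // f ∈ Y k}) ⊕
    {g : (n : ℕ) → X n // ∀ k : ℕ, (fun i : Fin k => g i.1) ∈ Y k}

/-- The cylinder set `Z(A)` over `A` at level `k`: all sequences of length `≥ k`
whose initial segment of length `k` lies in `A`. -/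
def Zcyl (Y : (k : ℕ) → Set ((i : Fin k) → X i.1)) (k : ℕ)
    (A : Set ((i : Fin k) → X i.1)) : Set (PathSpace Y) :=
  Sum.elim (fun q => ∃ h : k ≤ q.1, restrictSeq h q.2.1 ∈ A)
    (fun g => (fun i : Fin k => g.1 i.1) ∈ A)

/-- The cylinder topology `τ_cyl`, generated by the open cylinder sets. -/
def tauCyl [∀ n, TopologicalSpace (X n)] (Y : (k : ℕ) → Set ((i : Fin k) → X i.1)) :
    TopologicalSpace (PathSpace Y) :=
  TopologicalSpace.generateFrom
    {S | ∃ (k : ℕ) (U : Set ((i : Fin k) → X i.1)), IsOpen U ∧ S = Zcyl Y k U}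

/-- The length of a finite or infinite sequence. -/
def plen (Y : (k : ℕ) → Set ((i : Fin k) → X i.1)) (p : PathSpace Y) : ℕ∞ :=
  Sum.elim (fun q => (q.1 : ℕ∞)) (fun _ => (⊤ : ℕ∞)) p

/-- Truncation of an element of the path space to length `k ≤ plen p`. -/
def truncSeq (Y : (k : ℕ) → Set ((i : Fin k) → X i.1)) (k : ℕ) :
    (p : PathSpace Y) → ((k : ℕ∞) ≤ plen Y p) → ((i : Fin k) → X i.1)
  | Sum.inl q, h => restrictSeq (by simpa [plen] using h) q.2.1
  | Sum.inr g, _ => fun i => g.1 i.1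

/-- A set is saturated if it is the intersection of its open neighbourhoods. -/
def SaturatedSet {Z : Type*} [TopologicalSpace Z] (A : Set Z) : Prop :=
  A = ⋂₀ {U : Set Z | IsOpen U ∧ A ⊆ U}

/-- The patch topology of a topology `t`: the coarsest topology refining both `t`
and the cocompact topology (generated by complements of `t`-compact saturated sets). -/
def patchOf {Z : Type*} (t : TopologicalSpace Z) : TopologicalSpace Z :=
  t ⊓ TopologicalSpace.generateFrom
    {V | ∃ K : Set Z, @IsCompact Z t K ∧ @SaturatedSet Z t K ∧ V = Kᶜ}

/-!
A point `p` of an open set `U ⊆ Y` lies in a basic open cylinder `Z(W₀) ⊆ U` (open cylinders are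
closed under finite intersections, so they form a basis). Local compactness of `Y_k` at the
truncation of `p` shrinks this to `p ∈ Z(W) ⊆ Z(C) ⊆ U` with `C ⊆ Y_k` compact and `W` open,
so `Z(C)` is a neighbourhood of `p`. Saturation of `K̃` gives an open `U ⊇ K̃` missing `w`,
and compactness of `K̃` extracts finitely many of the cylinders `Z(C)`.
-/

theorem SaturatedSet.exists_isOpen_notMem {Z : Type*} [TopologicalSpace Z] {A : Set Z}
    (hA : SaturatedSet A) {w : Z} (hw : w ∉ A) : ∃ U, IsOpen U ∧ A ⊆ U ∧ w ∉ U := by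
  by_contra! h
  rw [hA] at hw
  exact hw (mem_sInter.2 fun U hU => h U hU.1 hU.2)

theorem exists_isOpen_inter_subset_isCompact_subset {T : Type*} [TopologicalSpace T]
    {S : Set T} [LocallyCompactSpace S] {x : T} (hx : x ∈ S) {U : Set T} (hU : U ∈ 𝓝 x) :
    ∃ W C, IsOpen W ∧ x ∈ W ∧ IsCompact C ∧ W ∩ S ⊆ C ∧ C ⊆ U ∩ S := by
  obtain ⟨s, hs, hsU, hsc⟩ := local_compact_nhds (x := (⟨x, hx⟩ : S))
    (continuous_subtype_val.continuousAt.preimage_mem_nhds hU)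
  obtain ⟨u, hu, hus⟩ := (mem_nhds_subtype S _ s).1 hs
  obtain ⟨W, hWu, hW, hxW⟩ := mem_nhds_iff.1 hu
  refine ⟨W, (↑) '' s, hW, hxW, hsc.image continuous_subtype_val, ?_, ?_⟩
  · rintro y ⟨hyW, hyS⟩
    exact ⟨⟨y, hyS⟩, hus (hWu hyW), rfl⟩
  · rintro _ ⟨y, hy, rfl⟩
    exact ⟨hsU hy, y.2⟩

theorem continuous_restrictSeq [∀ n, TopologicalSpace (X n)] {k l : ℕ} (h : k ≤ l) :
    Continuous (restrictSeq (X := X) h) :=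
  continuous_pi fun _ => continuous_apply _

attribute [local instance] tauCyl

namespace PathSpace

variable (Y : (k : ℕ) → Set ((i : Fin k) → X i.1))

theorem mem_Zcyl_iff {k : ℕ} {A : Set ((i : Fin k) → X i.1)} {p : PathSpace Y} :
    p ∈ Zcyl Y k A ↔ ∃ h : (k : ℕ∞) ≤ plen Y p, truncSeq Y k p h ∈ A := by
  rcases p with q | g
  · exact ⟨fun ⟨h, hA⟩ => ⟨by simpa [plen] using h, hA⟩,
      fun ⟨h, hA⟩ => ⟨by simpa [plen] using h, hA⟩⟩
  · exact ⟨fun hA => ⟨le_top, hA⟩, fun ⟨_, hA⟩ => hA⟩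

theorem restrictSeq_truncSeq {k l : ℕ} (hkl : k ≤ l) (p : PathSpace Y)
    (hl : (l : ℕ∞) ≤ plen Y p) :
    restrictSeq hkl (truncSeq Y l p hl) = truncSeq Y k p (le_trans (by exact_mod_cast hkl) hl) := by
  cases p <;> rfl

variable {Y}

theorem truncSeq_mem (hcompat : ∀ (k l : ℕ) (h : k ≤ l), ∀ f ∈ Y l, restrictSeq h f ∈ Y k)
    (k : ℕ) (p : PathSpace Y) (h : (k : ℕ∞) ≤ plen Y p) : truncSeq Y k p h ∈ Y k := by
  rcases p with q | g
  · exact hcompat k q.1 (by simpa [plen] using h) q.2.1 q.2.2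
  · exact g.2 k

theorem Zcyl_mono {k : ℕ} {A B : Set ((i : Fin k) → X i.1)} (h : A ⊆ B) :
    Zcyl Y k A ⊆ Zcyl Y k B := fun _ hp =>
  let ⟨hk, hA⟩ := (mem_Zcyl_iff Y).1 hp
  (mem_Zcyl_iff Y).2 ⟨hk, h hA⟩

theorem Zcyl_inter_Y (hcompat : ∀ (k l : ℕ) (h : k ≤ l), ∀ f ∈ Y l, restrictSeq h f ∈ Y k)
    {k : ℕ} (A : Set ((i : Fin k) → X i.1)) : Zcyl Y k (A ∩ Y k) = Zcyl Y k A := by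
  refine (Zcyl_mono inter_subset_left).antisymm fun p hp => ?_
  obtain ⟨hk, hA⟩ := (mem_Zcyl_iff Y).1 hp
  exact (mem_Zcyl_iff Y).2 ⟨hk, hA, truncSeq_mem hcompat k p hk⟩

theorem Zcyl_inter_Zcyl {k l : ℕ} (hkl : k ≤ l) (A : Set ((i : Fin k) → X i.1))
    (B : Set ((i : Fin l) → X i.1)) :
    Zcyl Y k A ∩ Zcyl Y l B = Zcyl Y l (restrictSeq hkl ⁻¹' A ∩ B) := by
  ext p
  simp only [mem_inter_iff, mem_Zcyl_iff, mem_preimage, restrictSeq_truncSeq]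
  exact ⟨fun ⟨⟨_, hA⟩, hl, hB⟩ => ⟨hl, hA, hB⟩, fun ⟨hl, hA, hB⟩ => ⟨⟨_, hA⟩, hl, hB⟩⟩

theorem Zcyl_zero_univ : Zcyl Y 0 univ = univ :=
  eq_univ_of_forall fun _ => (mem_Zcyl_iff Y).2 ⟨zero_le, mem_univ _⟩

variable [∀ n, TopologicalSpace (X n)]

theorem isOpen_Zcyl {k : ℕ} {W : Set ((i : Fin k) → X i.1)} (hW : IsOpen W) :
    IsOpen (Zcyl Y k W) :=
  GenerateOpen.basic _ ⟨k, W, hW, rfl⟩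

theorem exists_isOpen_Zcyl_eq_inter {k l : ℕ} {A : Set ((i : Fin k) → X i.1)}
    {B : Set ((i : Fin l) → X i.1)} (hA : IsOpen A) (hB : IsOpen B) :
    ∃ (m : ℕ) (U : Set ((i : Fin m) → X i.1)), IsOpen U ∧ Zcyl Y k A ∩ Zcyl Y l B = Zcyl Y m U := by
  wlog hkl : k ≤ l generalizing k l A B
  · rw [inter_comm]
    exact this hB hA (le_of_not_ge hkl)
  exact ⟨l, _, ((continuous_restrictSeq hkl).isOpen_preimage _ hA).inter hB,
    Zcyl_inter_Zcyl hkl A B⟩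

variable (Y) in
theorem isTopologicalBasis_Zcyl :
    IsTopologicalBasis {S | ∃ (k : ℕ) (U : Set ((i : Fin k) → X i.1)), IsOpen U ∧ S = Zcyl Y k U}
    where
  exists_subset_inter := by
    rintro _ ⟨k, A, hA, rfl⟩ _ ⟨l, B, hB, rfl⟩ p hp
    obtain ⟨m, U, hU, hAB⟩ := exists_isOpen_Zcyl_eq_inter hA hB
    exact ⟨_, ⟨m, U, hU, rfl⟩, hAB ▸ hp, hAB.ge⟩
  sUnion_eq :=
    eq_univ_of_univ_subset <| subset_sUnion_of_mem ⟨0, univ, isOpen_univ, Zcyl_zero_univ.symm⟩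
  eq_generateFrom := rfl

section LocallyCompact

variable (hcompat : ∀ (k l : ℕ) (h : k ≤ l), ∀ f ∈ Y l, restrictSeq h f ∈ Y k)
  (hLC : ∀ k, LocallyCompactSpace {f : (i : Fin k) → X i.1 // f ∈ Y k})
include hcompat hLC

theorem exists_isCompact_Zcyl_mem_nhds {U : Set (PathSpace Y)} (hU : IsOpen U) {p : PathSpace Y}
    (hp : p ∈ U) : ∃ (k : ℕ) (C : Set ((i : Fin k) → X i.1)),
      IsCompact C ∧ C ⊆ Y k ∧ Zcyl Y k C ∈ 𝓝 p ∧ Zcyl Y k C ⊆ U := by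
  obtain ⟨_, ⟨k, W₀, hW₀, rfl⟩, hpW₀, hW₀U⟩ :=
    (isTopologicalBasis_Zcyl Y).exists_subset_of_mem_open hp hU
  obtain ⟨hk, hx⟩ := (mem_Zcyl_iff Y).1 hpW₀
  have := hLC k
  obtain ⟨W, C, hW, hxW, hC, hWC, hCW₀⟩ :=
    exists_isOpen_inter_subset_isCompact_subset (truncSeq_mem hcompat k p hk) (hW₀.mem_nhds hx)
  refine ⟨k, C, hC, fun f hf => (hCW₀ hf).2, ?_, (Zcyl_mono fun f hf => (hCW₀ hf).1).trans hW₀U⟩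
  refine mem_of_superset ((isOpen_Zcyl hW).mem_nhds ((mem_Zcyl_iff Y).2 ⟨hk, hxW⟩)) ?_
  rw [← Zcyl_inter_Y hcompat]
  exact Zcyl_mono hWC

theorem exists_finite_compact_Zcyl_cover {K U : Set (PathSpace Y)} (hK : IsCompact K)
    (hU : IsOpen U) (hKU : K ⊆ U) :
    ∃ (n : ℕ) (l : Fin n → ℕ) (C : (i : Fin n) → Set ((j : Fin (l i)) → X j.1)),
      (∀ i, IsCompact (C i) ∧ C i ⊆ Y (l i)) ∧
      K ⊆ ⋃ i, Zcyl Y (l i) (C i) ∧ ⋃ i, Zcyl Y (l i) (C i) ⊆ U := by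
  choose k C hC hCY hCp hCU using fun p (hp : p ∈ K) =>
    exists_isCompact_Zcyl_mem_nhds hcompat hLC hU (hKU hp)
  obtain ⟨t, ht⟩ := hK.elim_nhds_subcover' (fun p hp => Zcyl Y (k p hp) (C p hp)) hCp
  let e := t.equivFin.symm
  refine ⟨t.card, fun i => k _ (e i).1.2, fun i => C _ (e i).1.2,
    fun i => ⟨hC _ _, hCY _ _⟩, ?_, iUnion_subset fun i => hCU _ _⟩
  rw [e.surjective.iUnion_comp fun q : t => Zcyl Y (k _ q.1.2) (C _ q.1.2)]
  intro p hp
  obtain ⟨q, hqt, hpq⟩ := mem_iUnion₂.1 (ht hp)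
  exact mem_iUnion.2 ⟨⟨q, hqt⟩, hpq⟩

end LocallyCompact

end PathSpace

theorem stmt_9_general [∀ n, TopologicalSpace (X n)]
    (Y : (k : ℕ) → Set ((i : Fin k) → X i.1))
    (hcompat : ∀ (k l : ℕ) (h : k ≤ l), ∀ f ∈ Y l, restrictSeq h f ∈ Y k)
    (hLC : ∀ k, LocallyCompactSpace {f : (i : Fin k) → X i.1 // f ∈ Y k})
    (Kt : Set (PathSpace Y))
    (hKc : @IsCompact (PathSpace Y) (tauCyl Y) Kt)
    (hKs : @SaturatedSet (PathSpace Y) (tauCyl Y) Kt)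
    (w : PathSpace Y) (hw : w ∉ Kt) :
    ∃ (n : ℕ) (l : Fin n → ℕ) (K : (i : Fin n) → Set ((j : Fin (l i)) → X j.1)),
      (∀ i, IsCompact (K i) ∧ K i ⊆ Y (l i)) ∧
      Kt ⊆ ⋃ i, Zcyl Y (l i) (K i) ∧ w ∉ ⋃ i, Zcyl Y (l i) (K i) := by
  obtain ⟨U, hU, hKU, hwU⟩ := hKs.exists_isOpen_notMem hw
  obtain ⟨n, l, K, hK, hcover, hsub⟩ :=
    PathSpace.exists_finite_compact_Zcyl_cover hcompat hLC hKc hU hKU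
  exact ⟨n, l, K, hK, hcover, fun hw' => hwU (hsub hw')⟩

/-- a compact saturated set in `(Y, τ_cyl)` avoiding a point `w` is
covered by finitely many cylinders of compact sets avoiding `w`. -/
theorem stmt_9 [∀ n, TopologicalSpace (X n)] [∀ n, T1Space (X n)] [∀ n, QuasiSober (X n)]
    (Y : (k : ℕ) → Set ((i : Fin k) → X i.1))
    (hclosed : ∀ k, IsClosed (Y k))
    (hcompat : ∀ (k l : ℕ) (h : k ≤ l), ∀ f ∈ Y l, restrictSeq h f ∈ Y k)
    (hLC : ∀ k, LocallyCompactSpace {f : (i : Fin k) → X i.1 // f ∈ Y k})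
    (Kt : Set (PathSpace Y))
    (hKc : @IsCompact (PathSpace Y) (tauCyl Y) Kt)
    (hKs : @SaturatedSet (PathSpace Y) (tauCyl Y) Kt)
    (w : PathSpace Y) (hw : w ∉ Kt) :
    ∃ (n : ℕ) (l : Fin n → ℕ) (K : (i : Fin n) → Set ((j : Fin (l i)) → X j.1)),
      (∀ i, IsCompact (K i) ∧ K i ⊆ Y (l i)) ∧
      Kt ⊆ ⋃ i, Zcyl Y (l i) (K i) ∧ w ∉ ⋃ i, Zcyl Y (l i) (K i) :=
  stmt_9_general Y hcompat hLC Kt hKc hKs w hw
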